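/- (Theorem 3.3, lower bound) Let σ > 0 and δ > 0, set r = δ/σ, and let p_z be the standardized two-component Gaussian mixture density p_z(v) = (N(v;−δ̂,σ̂) + N(v;δ̂,σ̂))/2 with δ̂ = δ/√(σ²+δ²), σ̂ = σ/√(σ²+δ²). Then the Kullback–Leibler divergence from the standard normal density satisfies KL(p_z ‖ N(·;0,1)) ≥ (1/2) ln(1 + r²) − ln 2. -/

import Mathlib

open Real MeasureTheory

/-- The univariate Gaussian density `N(v; μ, σ) = (1/(σ√(2π))) exp(−(v−μ)²/(2σ²))`. -/
noncomputable def gauss (μ σ : ℝ) (v : ℝ) : ℝ :=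
  (1 / (σ * Real.sqrt (2 * π))) * Real.exp (-((v - μ) ^ 2) / (2 * σ ^ 2))

/-- The KL divergence `KL(p‖q) = ∫ p(v) ln(p(v)/q(v)) dv` of densities on ℝ. -/
noncomputable def klDiv (p q : ℝ → ℝ) : ℝ :=
  ∫ v : ℝ, p v * Real.log (p v / q v)

/-!
Since `p_z ≥ N(·; ±δ̂, σ̂) / 2` pointwise, `p_z ln (p_z / q)` dominates the average of
`N(·; ±δ̂, σ̂) ln (N(·; ±δ̂, σ̂) / (2 q))`, so `KL(p_z ‖ q)` is at least the average of the
two component divergences minus `ln 2`. For `q = N(·; 0, 1)` each component divergence is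
`-ln σ̂ + (σ̂² + δ̂² - 1) / 2 = -ln σ̂ = ln (1 + r²) / 2`. Integrability of `p_z ln (p_z / q)`
follows from the same lower bound together with the upper bound given by convexity of
`x ↦ x ln x`.
-/

open ProbabilityTheory

section Gaussian

variable {μ σ : ℝ}

theorem continuous_gauss (μ σ : ℝ) : Continuous (gauss μ σ) := by
  unfold gauss; fun_prop

theorem gauss_eq_gaussianPDFReal (hσ : 0 < σ) :
    gauss μ σ = gaussianPDFReal μ (σ ^ 2).toNNReal := by
  ext v
  rw [gaussianPDFReal, Real.coe_toNNReal _ (sq_nonneg σ), gauss,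
    show 2 * π * σ ^ 2 = σ ^ 2 * (2 * π) by ring, sqrt_mul (sq_nonneg σ), sqrt_sq hσ.le,
    one_div]

theorem gauss_pos (hσ : 0 < σ) (v : ℝ) : 0 < gauss μ σ v := by
  rw [gauss_eq_gaussianPDFReal hσ]
  exact gaussianPDFReal_pos _ _ _ (by simp [hσ.ne'])

theorem integrable_gauss (hσ : 0 < σ) : Integrable (gauss μ σ) := by
  rw [gauss_eq_gaussianPDFReal hσ]
  exact integrable_gaussianPDFReal _ _

theorem integral_gauss (hσ : 0 < σ) : ∫ v, gauss μ σ v = 1 := by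
  rw [gauss_eq_gaussianPDFReal hσ]
  exact integral_gaussianPDFReal_eq_one _ (by simp [hσ.ne'])

theorem integrable_gauss_mul_iff (hσ : 0 < σ) {f : ℝ → ℝ} :
    Integrable (fun v => gauss μ σ v * f v) ↔ Integrable f (gaussianReal μ (σ ^ 2).toNNReal) := by
  rw [gaussianReal_of_var_ne_zero _ (by simp [hσ.ne']),
    integrable_withDensity_iff_integrable_smul' (measurable_gaussianPDF _ _)
      (ae_of_all _ fun _ => gaussianPDF_lt_top), gauss_eq_gaussianPDFReal hσ]
  simp only [toReal_gaussianPDF, smul_eq_mul]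

theorem integral_gauss_mul (hσ : 0 < σ) (f : ℝ → ℝ) :
    ∫ v, gauss μ σ v * f v = ∫ v, f v ∂gaussianReal μ (σ ^ 2).toNNReal := by
  rw [integral_gaussianReal_eq_integral_smul (by simp [hσ.ne']), gauss_eq_gaussianPDFReal hσ]
  rfl

theorem log_gauss (hσ : 0 < σ) (v : ℝ) :
    log (gauss μ σ v) = -log σ - log (√(2 * π)) - (v - μ) ^ 2 / (2 * σ ^ 2) := by
  have h2π : 0 < √(2 * π) := sqrt_pos.mpr (by positivity)
  rw [gauss, log_mul (by positivity) (exp_ne_zero _), log_exp, one_div, log_inv,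
    log_mul hσ.ne' h2π.ne']
  ring

end Gaussian

section GaussianReal

variable {μ : ℝ} {v : NNReal}

theorem integrable_sub_gaussianReal : Integrable (fun x => x - μ) (gaussianReal μ v) :=
  ((memLp_id_gaussianReal 1).integrable le_rfl).sub (integrable_const μ)

theorem integrable_sub_sq_gaussianReal : Integrable (fun x => (x - μ) ^ 2) (gaussianReal μ v) :=
  ((memLp_id_gaussianReal 2).sub (memLp_const μ)).integrable_sq

theorem integrable_quadratic_gaussianReal (a b c : ℝ) :
    Integrable (fun x => a + b * (x - μ) + c * (x - μ) ^ 2) (gaussianReal μ v) :=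
  ((integrable_const a).add (integrable_sub_gaussianReal.const_mul b)).add
    (integrable_sub_sq_gaussianReal.const_mul c)

theorem integral_quadratic_gaussianReal (a b c : ℝ) :
    ∫ x, a + b * (x - μ) + c * (x - μ) ^ 2 ∂gaussianReal μ v = a + c * v := by
  have hmean : ∫ x, x - μ ∂gaussianReal μ v = 0 := by
    rw [integral_sub (f := fun x => x) ((memLp_id_gaussianReal 1).integrable le_rfl)
      (integrable_const μ)]
    simp
  have hvar : ∫ x, (x - μ) ^ 2 ∂gaussianReal μ v = v := by
    rw [← variance_fun_id_gaussianReal (μ := μ) (v := v),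
      variance_eq_integral measurable_id'.aemeasurable, integral_id_gaussianReal]
  rw [integral_add (f := fun x => a + b * (x - μ))
      ((integrable_const a).add (integrable_sub_gaussianReal.const_mul b))
      (integrable_sub_sq_gaussianReal.const_mul c),
    integral_add (f := fun _ => a) (integrable_const a) (integrable_sub_gaussianReal.const_mul b),
    integral_const_mul, integral_const_mul, hmean, hvar]
  simp

end GaussianReal

section GaussianKL

variable {μ σ : ℝ}

theorem log_gauss_div_gauss_zero_one (hσ : 0 < σ) (v : ℝ) :
    log (gauss μ σ v / gauss 0 1 v) =
      -log σ + μ ^ 2 / 2 + μ * (v - μ) + (1 / 2 - 1 / (2 * σ ^ 2)) * (v - μ) ^ 2 := by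
  rw [log_div (gauss_pos hσ v).ne' (gauss_pos one_pos v).ne', log_gauss hσ, log_gauss one_pos,
    log_one]
  field_simp
  ring

theorem integrable_gauss_mul_log_div_gauss_zero_one (hσ : 0 < σ) :
    Integrable (fun v => gauss μ σ v * log (gauss μ σ v / gauss 0 1 v)) := by
  simp_rw [log_gauss_div_gauss_zero_one hσ]
  exact (integrable_gauss_mul_iff hσ).2 (integrable_quadratic_gaussianReal _ _ _)

theorem klDiv_gauss_gauss_zero_one (hσ : 0 < σ) :
    klDiv (gauss μ σ) (gauss 0 1) = -log σ + (σ ^ 2 + μ ^ 2 - 1) / 2 := by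
  simp_rw [klDiv, log_gauss_div_gauss_zero_one hσ]
  rw [integral_gauss_mul hσ, integral_quadratic_gaussianReal, Real.coe_toNNReal _ (sq_nonneg σ)]
  field_simp
  ring

end GaussianKL

section Mixture

theorem mul_log_div_add_half_le {x y z : ℝ} (hx : 0 ≤ x) (hy : 0 ≤ y) (hz : 0 < z) :
    (x + y) / 2 * log ((x + y) / 2 / z) ≤ (x * log (x / z) + y * log (y / z)) / 2 := by
  have hconv := convexOn_mul_log.2 (Set.mem_Ici.2 (div_nonneg hx hz.le))
    (Set.mem_Ici.2 (div_nonneg hy hz.le)) (by norm_num : (0 : ℝ) ≤ 1 / 2)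
    (by norm_num : (0 : ℝ) ≤ 1 / 2) (by norm_num)
  simp only [smul_eq_mul] at hconv
  calc (x + y) / 2 * log ((x + y) / 2 / z)
      = z * ((1 / 2 * (x / z) + 1 / 2 * (y / z)) * log (1 / 2 * (x / z) + 1 / 2 * (y / z))) := by
        field_simp
    _ ≤ z * (1 / 2 * (x / z * log (x / z)) + 1 / 2 * (y / z * log (y / z))) := by gcongr
    _ = (x * log (x / z) + y * log (y / z)) / 2 := by field_simp

theorem mul_log_div_sub_mul_log_two_le {x y z : ℝ} (hx : 0 < x) (hy : 0 ≤ y) (hz : 0 < z) :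
    x * log (x / z) - x * log 2 ≤ x * log ((x + y) / 2 / z) := by
  rw [← mul_sub, ← log_div (div_pos hx hz).ne' two_ne_zero, div_right_comm]
  gcongr
  linarith

variable {p₁ p₂ q : ℝ → ℝ}

theorem klDiv_mixture_ge (hp₁ : ∀ v, 0 < p₁ v) (hp₂ : ∀ v, 0 < p₂ v) (hq : ∀ v, 0 < q v)
    (hm₁ : Measurable p₁) (hm₂ : Measurable p₂) (hmq : Measurable q)
    (hint₁ : Integrable p₁) (hint₂ : Integrable p₂) (hmass₁ : ∫ v, p₁ v = 1)
    (hmass₂ : ∫ v, p₂ v = 1) (hkl₁ : Integrable fun v => p₁ v * log (p₁ v / q v))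
    (hkl₂ : Integrable fun v => p₂ v * log (p₂ v / q v)) :
    (klDiv p₁ q + klDiv p₂ q) / 2 - log 2 ≤ klDiv (fun v => (p₁ v + p₂ v) / 2) q := by
  set lower : ℝ → ℝ := fun v =>
    (p₁ v * log (p₁ v / q v) - p₁ v * log 2 + (p₂ v * log (p₂ v / q v) - p₂ v * log 2)) / 2
  have hlower_int : Integrable lower :=
    ((hkl₁.sub (hint₁.mul_const _)).add (hkl₂.sub (hint₂.mul_const _))).div_const 2
  have hlower_le : lower ≤ fun v => (p₁ v + p₂ v) / 2 * log ((p₁ v + p₂ v) / 2 / q v) := by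
    intro v
    have h₁ := mul_log_div_sub_mul_log_two_le (hp₁ v) (hp₂ v).le (hq v)
    have h₂ := mul_log_div_sub_mul_log_two_le (hp₂ v) (hp₁ v).le (hq v)
    rw [add_comm (p₂ v)] at h₂
    simp only [lower]
    linarith
  have hmix_int : Integrable fun v => (p₁ v + p₂ v) / 2 * log ((p₁ v + p₂ v) / 2 / q v) :=
    integrable_of_le_of_le (by fun_prop) (ae_of_all _ hlower_le)
      (ae_of_all _ fun v => mul_log_div_add_half_le (hp₁ v).le (hp₂ v).le (hq v))
      hlower_int ((hkl₁.add hkl₂).div_const 2)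
  have hlower : ∫ v, lower v = (klDiv p₁ q + klDiv p₂ q) / 2 - log 2 := by
    simp only [lower, klDiv]
    rw [integral_div, integral_add (by exact hkl₁.sub (hint₁.mul_const _))
        (by exact hkl₂.sub (hint₂.mul_const _)),
      integral_sub hkl₁ (hint₁.mul_const _), integral_sub hkl₂ (hint₂.mul_const _),
      integral_mul_const, integral_mul_const, hmass₁, hmass₂]
    ring
  rw [← hlower]
  exact integral_mono hlower_int hmix_int hlower_le

end Mixture

theorem klDiv_gauss_mixture_ge {μ σ : ℝ} (hσ : 0 < σ) :
    -log σ + (σ ^ 2 + μ ^ 2 - 1) / 2 - log 2 ≤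
      klDiv (fun v => (gauss (-μ) σ v + gauss μ σ v) / 2) (gauss 0 1) := by
  have h := klDiv_mixture_ge (p₁ := gauss (-μ) σ) (p₂ := gauss μ σ) (q := gauss 0 1)
    (gauss_pos hσ) (gauss_pos hσ) (gauss_pos one_pos) (continuous_gauss _ _).measurable
    (continuous_gauss _ _).measurable (continuous_gauss _ _).measurable (integrable_gauss hσ)
    (integrable_gauss hσ) (integral_gauss hσ) (integral_gauss hσ)
    (integrable_gauss_mul_log_div_gauss_zero_one hσ)
    (integrable_gauss_mul_log_div_gauss_zero_one hσ)
  rw [klDiv_gauss_gauss_zero_one hσ, klDiv_gauss_gauss_zero_one hσ, neg_sq] at h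
  linarith

theorem neg_log_div_sqrt_sq_add_sq {σ : ℝ} (δ : ℝ) (hσ : 0 < σ) :
    -log (σ / √(σ ^ 2 + δ ^ 2)) = 1 / 2 * log (1 + (δ / σ) ^ 2) := by
  have hs : 0 < σ ^ 2 + δ ^ 2 := by positivity
  rw [show 1 + (δ / σ) ^ 2 = (σ ^ 2 + δ ^ 2) / σ ^ 2 by field_simp,
    log_div hσ.ne' (sqrt_pos.2 hs).ne', log_sqrt hs.le,
    log_div hs.ne' (by positivity), log_pow]
  push_cast
  ring

theorem klDiv_standardized_mixture_lower_general (σ δ : ℝ) (hσ : 0 < σ)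
    (r δhat σhat : ℝ) (hr : r = δ / σ)
    (hδhat : δhat = δ / Real.sqrt (σ ^ 2 + δ ^ 2))
    (hσhat : σhat = σ / Real.sqrt (σ ^ 2 + δ ^ 2)) :
    klDiv (fun v => (gauss (-δhat) σhat v + gauss δhat σhat v) / 2) (gauss 0 1) ≥
      (1 / 2) * Real.log (1 + r ^ 2) - Real.log 2 := by
  have hσhat_pos : 0 < σhat := hσhat ▸ div_pos hσ (sqrt_pos.2 (by positivity))
  have hunit : σhat ^ 2 + δhat ^ 2 = 1 := by
    rw [hσhat, hδhat, div_pow, div_pow, sq_sqrt (by positivity), ← add_div,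
      div_self (by positivity)]
  have hlog : -log σhat = 1 / 2 * log (1 + r ^ 2) := by
    rw [hσhat, hr, neg_log_div_sqrt_sq_add_sq δ hσ]
  have h := klDiv_gauss_mixture_ge (μ := δhat) hσhat_pos
  rw [hunit] at h
  linarith

/-- Theorem 3.3, lower bound: for the standardized two-component Gaussian
mixture `p_z(v) = (N(v;−δ̂,σ̂) + N(v;δ̂,σ̂))/2` with `r = δ/σ`,
`KL(p_z ‖ N(·;0,1)) ≥ (1/2) ln(1 + r²) − ln 2`. -/
theorem klDiv_standardized_mixture_lower (σ δ : ℝ) (hσ : 0 < σ) (hδ : 0 < δ)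
    (r δhat σhat : ℝ) (hr : r = δ / σ)
    (hδhat : δhat = δ / Real.sqrt (σ ^ 2 + δ ^ 2))
    (hσhat : σhat = σ / Real.sqrt (σ ^ 2 + δ ^ 2)) :
    klDiv (fun v => (gauss (-δhat) σhat v + gauss δhat σhat v) / 2) (gauss 0 1) ≥
      (1 / 2) * Real.log (1 + r ^ 2) - Real.log 2 :=
  klDiv_standardized_mixture_lower_general σ δ hσ r δhat σhat hr hδhat hσhat
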